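/- arXiv:2605.04843 — 5 statements merged into one kernel-verified Lean document; each statement's English description precedes it below -/
import Mathlib

section
/- Let H be a real Hilbert space, M : H → H a bounded linear, monotone (i.e., (Mu, u)_H ≥ 0), symmetric operator, and u ∈ L²(0,T; H). For 0 ≤ τ ≤ T define the shifted function S(τ)u by (S(τ)u)(t) = 0 for 0 ≤ t ≤ τ and (S(τ)u)(t) = u(t − τ) for τ < t ≤ T. Then ∫₀ᵀ (M u(t−τ), u(t))_H dt ≤ ∫₀ᵀ (M u(t), u(t))_H dt, where the integrand on the left is interpreted as 0 for t ≤ τ. -/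
open MeasureTheory RealInnerProductSpace

/- Averaging the pointwise bound `2 (M u(t-τ), u(t)) ≤ (M u(t-τ), u(t-τ)) + (M u(t), u(t))` over
`(τ, T)`, both terms on the right become integrals of the nonnegative function `(M u, u)` over
subintervals of `(0, T)`, hence each is at most `∫₀ᵀ (M u, u)`. -/

theorem two_mul_inner_apply_le {H : Type*} [NormedAddCommGroup H] [InnerProductSpace ℝ H]
    (M : H →L[ℝ] H) (hmono : ∀ v : H, 0 ≤ ⟪M v, v⟫) (hsymm : ∀ v w : H, ⟪M v, w⟫ = ⟪M w, v⟫)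
    (v w : H) :
    2 * ⟪M v, w⟫ ≤ ⟪M v, v⟫ + ⟪M w, w⟫ := by
  have h := hmono (v - w)
  simp only [map_sub, inner_sub_left, inner_sub_right] at h
  linarith [hsymm v w]

section Shift

variable {f : ℝ → ℝ} {T τ : ℝ}

theorem IntervalIntegrable.comp_sub_of_le {E : Type*} [NormedAddCommGroup E] {g : ℝ → E}
    (hg : IntervalIntegrable g volume 0 T) (hτ0 : 0 ≤ τ) (hτT : τ ≤ T) :
    IntervalIntegrable (fun t => g (t - τ)) volume τ T := by
  have hsub : IntervalIntegrable g volume 0 (T - τ) :=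
    hg.mono_set (Set.uIcc_subset_uIcc Set.left_mem_uIcc
      (Set.mem_uIcc_of_le (by linarith) (by linarith)))
  simpa using hsub.comp_sub_right τ

theorem integral_comp_sub_le_of_nonneg (hf : 0 ≤ f) (hfi : IntervalIntegrable f volume 0 T)
    (hτ0 : 0 ≤ τ) (hτT : τ ≤ T) :
    ∫ t in τ..T, f (t - τ) ≤ ∫ t in (0:ℝ)..T, f t := by
  rw [intervalIntegral.integral_comp_sub_right, sub_self]
  exact intervalIntegral.integral_mono_interval le_rfl (by linarith) (by linarith)
    (ae_of_all _ hf) hfi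

end Shift

theorem stmt_1_general {H : Type*} [NormedAddCommGroup H] [InnerProductSpace ℝ H]
    (M : H →L[ℝ] H)
    (hmono : ∀ v : H, 0 ≤ ⟪M v, v⟫)
    (hsymm : ∀ v w : H, ⟪M v, w⟫ = ⟪M w, v⟫)
    (T τ : ℝ) (hτ0 : 0 ≤ τ) (hτT : τ ≤ T)
    (u : ℝ → H)
    (hint : IntervalIntegrable (fun t => ⟪M (u t), u t⟫) volume 0 T)
    (hcross : IntervalIntegrable (fun t => ⟪M (u (t - τ)), u t⟫) volume τ T) :
    ∫ t in τ..T, ⟪M (u (t - τ)), u t⟫ ≤ ∫ t in (0:ℝ)..T, ⟪M (u t), u t⟫ := by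
  set f : ℝ → ℝ := fun t => ⟪M (u t), u t⟫
  have hf : 0 ≤ f := fun t => hmono (u t)
  have hshift : IntervalIntegrable (fun t => f (t - τ)) volume τ T := hint.comp_sub_of_le hτ0 hτT
  have htail : IntervalIntegrable f volume τ T :=
    hint.mono_set (Set.uIcc_subset_uIcc (Set.mem_uIcc_of_le hτ0 hτT) Set.right_mem_uIcc)
  calc ∫ t in τ..T, ⟪M (u (t - τ)), u t⟫
      ≤ ∫ t in τ..T, (f (t - τ) + f t) / 2 :=
        intervalIntegral.integral_mono_on hτT hcross ((hshift.add htail).div_const 2)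
          fun t _ => by linarith [two_mul_inner_apply_le M hmono hsymm (u (t - τ)) (u t)]
    _ = ((∫ t in τ..T, f (t - τ)) + ∫ t in τ..T, f t) / 2 := by
        rw [intervalIntegral.integral_div, intervalIntegral.integral_add hshift htail]
    _ ≤ ((∫ t in (0:ℝ)..T, f t) + ∫ t in (0:ℝ)..T, f t) / 2 := by
        gcongr
        · exact integral_comp_sub_le_of_nonneg hf hint hτ0 hτT
        · exact intervalIntegral.integral_mono_interval hτ0 hτT le_rfl (ae_of_all _ hf) hint
    _ = ∫ t in (0:ℝ)..T, f t := by ring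

/-- For a bounded linear, monotone, symmetric operator `M` on a real Hilbert
space `H`, `u ∈ L²(0,T;H)`, and `0 ≤ τ ≤ T`, the pairing of the zero-fill
time shift `S(τ)(M∘u)` against `u` is bounded by the pairing of `M∘u` with `u`:
`∫₀ᵀ (M u(t−τ), u(t)) dt ≤ ∫₀ᵀ (M u(t), u(t)) dt`, the left integrand being
zero for `t ≤ τ`. -/
theorem stmt_1 {H : Type*} [NormedAddCommGroup H] [InnerProductSpace ℝ H] [CompleteSpace H]
    (M : H →L[ℝ] H)
    (hmono : ∀ v : H, 0 ≤ ⟪M v, v⟫)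
    (hsymm : ∀ v w : H, ⟪M v, w⟫ = ⟪M w, v⟫)
    (T τ : ℝ) (hτ0 : 0 ≤ τ) (hτT : τ ≤ T)
    (u : ℝ → H)
    (hu : MemLp u 2 (volume.restrict (Set.Ioc 0 T)))
    (hint : IntervalIntegrable (fun t => ⟪M (u t), u t⟫) volume 0 T)
    (hcross : IntervalIntegrable (fun t => ⟪M (u (t - τ)), u t⟫) volume τ T) :
    ∫ t in τ..T, ⟪M (u (t - τ)), u t⟫ ≤ ∫ t in (0:ℝ)..T, ⟪M (u t), u t⟫ :=
  stmt_1_general M hmono hsymm T τ hτ0 hτT u hint hcross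
end

section
/- Let H be a real Hilbert space, M : H → H a bounded linear, monotone, symmetric operator, u ∈ L²(0,T; H), and suppose the limit z := lim_{τ→0⁺} (1/τ)(I − S(τ))(M∘u) exists in a suitable dual pairing sense against u, where S(τ) is the zero-fill time shift. Then the pairing of this derivative with u is nonnegative: lim_{τ→0⁺} (1/τ)[∫₀ᵀ (Mu(t), u(t))_H dt − ∫_τ^T (Mu(t−τ), u(t))_H dt] ≥ 0. -/
/-!
Polarising the monotonicity of the symmetric operator `M` at `v - w` gives
`(Mv, w) ≤ ((Mv, v) + (Mw, w)) / 2`. Hence the cross term `∫_τ^T (Mu(t−τ), u(t)) dt` is at most the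
mean of `∫_0^{T−τ} (Mu, u)` and `∫_τ^T (Mu, u)`, each of which is at most `∫_0^T (Mu, u)` because
the integrand is nonnegative. So every difference quotient is nonnegative, and so is its limit.
-/

open MeasureTheory RealInnerProductSpace Filter Set

theorem inner_map_le_add_div_two {E : Type*} [NormedAddCommGroup E] [InnerProductSpace ℝ E]
    (M : E →L[ℝ] E) (hmono : ∀ v : E, 0 ≤ ⟪M v, v⟫) (hsymm : ∀ v w : E, ⟪M v, w⟫ = ⟪M w, v⟫)
    (v w : E) : ⟪M v, w⟫ ≤ (⟪M v, v⟫ + ⟪M w, w⟫) / 2 := by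
  have hexpand : ⟪M (v - w), v - w⟫ = ⟪M v, v⟫ - 2 * ⟪M v, w⟫ + ⟪M w, w⟫ := by
    rw [map_sub, inner_sub_left, inner_sub_right, inner_sub_right, hsymm w v]
    ring
  linarith [hmono (v - w)]

section ShiftedIntegral

variable {f g : ℝ → ℝ} {T τ : ℝ}

theorem intervalIntegral_comp_sub_le (hf0 : ∀ t, 0 ≤ f t)
    (hf : IntervalIntegrable f volume 0 T) (hτ : 0 ≤ τ) (hτT : τ ≤ T) :
    ∫ t in τ..T, f (t - τ) ≤ ∫ t in (0 : ℝ)..T, f t := by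
  rw [intervalIntegral.integral_comp_sub_right, sub_self]
  exact intervalIntegral.integral_mono_interval le_rfl (by linarith) (by linarith)
    (Eventually.of_forall hf0) hf

theorem intervalIntegral_le_of_le_shift_average (hf0 : ∀ t, 0 ≤ f t)
    (hf : IntervalIntegrable f volume 0 T) (hg : IntervalIntegrable g volume τ T)
    (hτ : 0 ≤ τ) (hτT : τ ≤ T) (hgf : ∀ t ∈ Icc τ T, g t ≤ (f (t - τ) + f t) / 2) :
    ∫ t in τ..T, g t ≤ ∫ t in (0 : ℝ)..T, f t := by
  have hτ_mem : τ ∈ uIcc 0 T := by rw [uIcc_of_le (hτ.trans hτT)]; exact ⟨hτ, hτT⟩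
  have hTτ_mem : T - τ ∈ uIcc 0 T := by
    rw [uIcc_of_le (hτ.trans hτT)]; constructor <;> linarith
  have hf_tail : IntervalIntegrable f volume τ T := hf.mono_set (uIcc_subset_uIcc_right hτ_mem)
  have hf_shift : IntervalIntegrable (fun t => f (t - τ)) volume τ T := by
    simpa using (hf.mono_set (uIcc_subset_uIcc_left hTτ_mem)).comp_sub_right τ
  have htail_le : ∫ t in τ..T, f t ≤ ∫ t in (0 : ℝ)..T, f t :=
    intervalIntegral.integral_mono_interval hτ hτT le_rfl (Eventually.of_forall hf0) hf
  calc ∫ t in τ..T, g t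
      ≤ ∫ t in τ..T, (f (t - τ) + f t) / 2 :=
        intervalIntegral.integral_mono_on hτT hg ((hf_shift.add hf_tail).div_const 2) hgf
    _ = ((∫ t in τ..T, f (t - τ)) + ∫ t in τ..T, f t) / 2 := by
        rw [intervalIntegral.integral_div, intervalIntegral.integral_add hf_shift hf_tail]
    _ ≤ ∫ t in (0 : ℝ)..T, f t := by
        linarith [intervalIntegral_comp_sub_le hf0 hf hτ hτT]

end ShiftedIntegral

theorem stmt_2_general {H : Type*} [NormedAddCommGroup H] [InnerProductSpace ℝ H]
    (M : H →L[ℝ] H)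
    (hmono : ∀ v : H, 0 ≤ ⟪M v, v⟫)
    (hsymm : ∀ v w : H, ⟪M v, w⟫ = ⟪M w, v⟫)
    (T : ℝ) (hT : 0 < T)
    (u : ℝ → H)
    (hint : IntervalIntegrable (fun t => ⟪M (u t), u t⟫) volume 0 T)
    (hcross : ∀ τ ∈ Set.Ioc (0:ℝ) T,
      IntervalIntegrable (fun t => ⟪M (u (t - τ)), u t⟫) volume τ T)
    (z : ℝ)
    (hz : Tendsto
      (fun τ : ℝ => (1 / τ) *
        ((∫ t in (0:ℝ)..T, ⟪M (u t), u t⟫) - ∫ t in τ..T, ⟪M (u (t - τ)), u t⟫))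
      (nhdsWithin 0 (Set.Ioi 0)) (nhds z)) :
    0 ≤ z := by
  refine ge_of_tendsto hz ?_
  filter_upwards [Ioo_mem_nhdsGT hT] with τ ⟨hτ0, hτT⟩
  have hcross_le : ∫ t in τ..T, ⟪M (u (t - τ)), u t⟫ ≤ ∫ t in (0:ℝ)..T, ⟪M (u t), u t⟫ :=
    intervalIntegral_le_of_le_shift_average (fun t => hmono (u t)) hint
      (hcross τ ⟨hτ0, hτT.le⟩) hτ0.le hτT.le
      (fun t _ => inner_map_le_add_div_two M hmono hsymm (u (t - τ)) (u t))
  exact mul_nonneg (by positivity) (sub_nonneg.mpr hcross_le)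

/-- For a bounded linear, monotone, symmetric operator `M` on a real Hilbert
space `H` and `u ∈ L²(0,T;H)`, if the difference-quotient pairing
`(1/τ)[∫₀ᵀ (Mu(t),u(t)) dt − ∫_τ^T (Mu(t−τ),u(t)) dt]` converges as `τ → 0⁺`
to some limit `z`, then `z ≥ 0`. -/
theorem stmt_2 {H : Type*} [NormedAddCommGroup H] [InnerProductSpace ℝ H] [CompleteSpace H]
    (M : H →L[ℝ] H)
    (hmono : ∀ v : H, 0 ≤ ⟪M v, v⟫)
    (hsymm : ∀ v w : H, ⟪M v, w⟫ = ⟪M w, v⟫)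
    (T : ℝ) (hT : 0 < T)
    (u : ℝ → H)
    (hu : MemLp u 2 (volume.restrict (Set.Ioc 0 T)))
    (hint : IntervalIntegrable (fun t => ⟪M (u t), u t⟫) volume 0 T)
    (hcross : ∀ τ ∈ Set.Ioc (0:ℝ) T,
      IntervalIntegrable (fun t => ⟪M (u (t - τ)), u t⟫) volume τ T)
    (z : ℝ)
    (hz : Tendsto
      (fun τ : ℝ => (1 / τ) *
        ((∫ t in (0:ℝ)..T, ⟪M (u t), u t⟫) - ∫ t in τ..T, ⟪M (u (t - τ)), u t⟫))
      (nhdsWithin 0 (Set.Ioi 0)) (nhds z)) :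
    0 ≤ z :=
  stmt_2_general M hmono hsymm T hT u hint hcross z hz
end

section
/- Let H be a real Hilbert space and F₁, F₂ : D ⊆ H → H accretive operators (i.e., (F_i u − F_i v, u − v)_H ≥ 0 for u, v in their domains), and suppose u ∈ D(F₁) ∩ D(F₂) satisfies F₁u + F₂u = 0. Fix s > 0, and suppose the sequences {u₁ⁿ}, {u₂ⁿ} satisfy the Peaceman–Rachford iteration (sI + F₁)u₁^{n+1} = (sI − F₂)u₂ⁿ and (sI + F₂)u₂^{n+1} = (sI − F₁)u₁^{n+1}. Define vⁿ = (sI + F₂)u₂ⁿ, v = (sI + F₂)u, wⁿ = (sI − F₂)u₂ⁿ, w = (sI − F₂)u. Then ‖v^{n+1} − v‖ ≤ ‖wⁿ − w‖ ≤ ‖vⁿ − v‖ for all n. -/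
/-! For an accretive `F` and `s ≥ 0`, expanding squares gives
`‖(sI − F)x − (sI − F)y‖ ≤ ‖(sI + F)x − (sI + F)y‖`, i.e. the Cayley transform
`(sI − F)(sI + F)⁻¹` is nonexpansive. Since `F₂u = −F₁u`, the fixed point `u` satisfies
`(sI ± F₂)u = (sI ∓ F₁)u`, so one Peaceman–Rachford half-step applies the Cayley transform
of `F₁` to `wⁿ − w`, and `wⁿ − w` is the Cayley transform of `F₂` applied to `vⁿ − v`. -/

open RealInnerProductSpace

section Cayley

variable {H : Type*} [NormedAddCommGroup H] [InnerProductSpace ℝ H]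

lemma norm_sub_le_norm_add_of_inner_nonneg {x y : H} (h : 0 ≤ ⟪x, y⟫) :
    ‖x - y‖ ≤ ‖x + y‖ := by
  have hsq : ‖x - y‖ ^ 2 ≤ ‖x + y‖ ^ 2 := by
    rw [norm_sub_sq_real, norm_add_sq_real]
    linarith
  exact (pow_le_pow_iff_left₀ (norm_nonneg _) (norm_nonneg _) two_ne_zero).mp hsq

def IsAccretiveOn (F : H → H) (D : Set H) : Prop :=
  ∀ x ∈ D, ∀ y ∈ D, 0 ≤ ⟪F x - F y, x - y⟫

lemma IsAccretiveOn.norm_cayley_sub_le {F : H → H} {D : Set H} (hF : IsAccretiveOn F D)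
    {s : ℝ} (hs : 0 ≤ s) {x y : H} (hx : x ∈ D) (hy : y ∈ D) :
    ‖(s • x - F x) - (s • y - F y)‖ ≤ ‖(s • x + F x) - (s • y + F y)‖ := by
  have hinner : 0 ≤ ⟪s • (x - y), F x - F y⟫ := by
    rw [real_inner_smul_left, real_inner_comm]
    exact mul_nonneg hs (hF x hx y hy)
  convert norm_sub_le_norm_add_of_inner_nonneg hinner using 2 <;>
    simp only [smul_sub] <;> abel

end Cayley

theorem stmt_3_general {H : Type*} [NormedAddCommGroup H] [InnerProductSpace ℝ H]
    (D₁ D₂ : Set H) (F₁ F₂ : H → H)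
    (hacc₁ : ∀ x ∈ D₁, ∀ y ∈ D₁, 0 ≤ ⟪F₁ x - F₁ y, x - y⟫)
    (hacc₂ : ∀ x ∈ D₂, ∀ y ∈ D₂, 0 ≤ ⟪F₂ x - F₂ y, x - y⟫)
    (u : H) (hu₁ : u ∈ D₁) (hu₂ : u ∈ D₂) (hsol : F₁ u + F₂ u = 0)
    (s : ℝ) (hs : 0 < s)
    (u₁ u₂ : ℕ → H)
    (hmem₁ : ∀ n, u₁ (n + 1) ∈ D₁) (hmem₂ : ∀ n, u₂ n ∈ D₂)
    (hiter₁ : ∀ n, s • u₁ (n + 1) + F₁ (u₁ (n + 1)) = s • u₂ n - F₂ (u₂ n))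
    (hiter₂ : ∀ n, s • u₂ (n + 1) + F₂ (u₂ (n + 1)) = s • u₁ (n + 1) - F₁ (u₁ (n + 1))) :
    ∀ n,
      ‖(s • u₂ (n + 1) + F₂ (u₂ (n + 1))) - (s • u + F₂ u)‖ ≤
        ‖(s • u₂ n - F₂ (u₂ n)) - (s • u - F₂ u)‖ ∧
      ‖(s • u₂ n - F₂ (u₂ n)) - (s • u - F₂ u)‖ ≤
        ‖(s • u₂ n + F₂ (u₂ n)) - (s • u + F₂ u)‖ := by
  intro n
  have hF₂u : F₂ u = -F₁ u := eq_neg_of_add_eq_zero_right hsol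
  refine ⟨?_, IsAccretiveOn.norm_cayley_sub_le hacc₂ hs.le (hmem₂ n) hu₂⟩
  calc ‖(s • u₂ (n + 1) + F₂ (u₂ (n + 1))) - (s • u + F₂ u)‖
      = ‖(s • u₁ (n + 1) - F₁ (u₁ (n + 1))) - (s • u - F₁ u)‖ := by
        rw [hiter₂ n, hF₂u, ← sub_eq_add_neg]
    _ ≤ ‖(s • u₁ (n + 1) + F₁ (u₁ (n + 1))) - (s • u + F₁ u)‖ :=
        IsAccretiveOn.norm_cayley_sub_le hacc₁ hs.le (hmem₁ n) hu₁
    _ = ‖(s • u₂ n - F₂ (u₂ n)) - (s • u - F₂ u)‖ := by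
        rw [hiter₁ n, hF₂u, sub_neg_eq_add]

/-- Peaceman–Rachford contraction estimates: with `F₁, F₂` accretive,
`F₁u + F₂u = 0`, and iterates satisfying the resolvent recursions, the
quantities `vⁿ = (sI+F₂)u₂ⁿ`, `wⁿ = (sI−F₂)u₂ⁿ` satisfy
`‖v^{n+1} − v‖ ≤ ‖wⁿ − w‖ ≤ ‖vⁿ − v‖`. -/
theorem stmt_3 {H : Type*} [NormedAddCommGroup H] [InnerProductSpace ℝ H] [CompleteSpace H]
    (D₁ D₂ : Set H) (F₁ F₂ : H → H)
    (hacc₁ : ∀ x ∈ D₁, ∀ y ∈ D₁, 0 ≤ ⟪F₁ x - F₁ y, x - y⟫)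
    (hacc₂ : ∀ x ∈ D₂, ∀ y ∈ D₂, 0 ≤ ⟪F₂ x - F₂ y, x - y⟫)
    (u : H) (hu₁ : u ∈ D₁) (hu₂ : u ∈ D₂) (hsol : F₁ u + F₂ u = 0)
    (s : ℝ) (hs : 0 < s)
    (u₁ u₂ : ℕ → H)
    (hmem₁ : ∀ n, u₁ (n + 1) ∈ D₁) (hmem₂ : ∀ n, u₂ n ∈ D₂)
    (hiter₁ : ∀ n, s • u₁ (n + 1) + F₁ (u₁ (n + 1)) = s • u₂ n - F₂ (u₂ n))
    (hiter₂ : ∀ n, s • u₂ (n + 1) + F₂ (u₂ (n + 1)) = s • u₁ (n + 1) - F₁ (u₁ (n + 1))) :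
    ∀ n,
      ‖(s • u₂ (n + 1) + F₂ (u₂ (n + 1))) - (s • u + F₂ u)‖ ≤
        ‖(s • u₂ n - F₂ (u₂ n)) - (s • u - F₂ u)‖ ∧
      ‖(s • u₂ n - F₂ (u₂ n)) - (s • u - F₂ u)‖ ≤
        ‖(s • u₂ n + F₂ (u₂ n)) - (s • u + F₂ u)‖ :=
  stmt_3_general D₁ D₂ F₁ F₂ hacc₁ hacc₂ u hu₁ hu₂ hsol s hs u₁ u₂ hmem₁ hmem₂ hiter₁ hiter₂
end

section
/- Under the hypotheses of the Peaceman–Rachford setup (F₁, F₂ accretive on a Hilbert space H, F₁u + F₂u = 0, iterates satisfying (sI + F₁)u₁^{n+1} = (sI − F₂)u₂ⁿ and (sI + F₂)u₂^{n+1} = (sI − F₁)u₁^{n+1}), suppose additionally that F_ℓ is k_ℓ-monotone: (F_ℓ x − F_ℓ y, x − y)_H ≥ k_ℓ(x − y) with k_ℓ ≥ 0. Then k₁(u₁ⁿ − u) + k₂(u₂ⁿ − u) → 0 as n → ∞. -/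
/-!
The quantity `eₙ = ‖s (u₂ⁿ - u) - (F₂ u₂ⁿ - F₂ u)‖²` is a Lyapunov function for the
iteration. For any operator `F` with modulus `k`, expanding the squares gives
`‖s a - d‖² + 4 s k ≤ ‖s a + d‖²` with `a = x - u`, `d = F x - F u`; the two half-steps of
the scheme turn the `+` side for one operator into the `-` side for the other, so that
`eₙ₊₁ + 4 s (k₁(u₁ⁿ⁺¹ - u) + k₂(u₂ⁿ⁺¹ - u)) ≤ eₙ`. Hence the nonnegative sequence
`k₁(u₁ⁿ - u) + k₂(u₂ⁿ - u)` is summable, and in particular tends to `0`.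
-/

open RealInnerProductSpace Filter

theorem summable_of_le_sub_succ {b e : ℕ → ℝ} (hb : ∀ n, 0 ≤ b n) (he : ∀ n, 0 ≤ e n)
    (h : ∀ n, b n ≤ e n - e (n + 1)) : Summable b := by
  refine summable_of_sum_range_le (c := e 0) hb fun n => ?_
  calc ∑ i ∈ Finset.range n, b i
      ≤ ∑ i ∈ Finset.range n, (e i - e (i + 1)) := Finset.sum_le_sum fun i _ => h i
    _ = e 0 - e n := Finset.sum_range_sub' e n
    _ ≤ e 0 := sub_le_self _ (he n)

section InnerProductSpace

variable {H : Type*} [NormedAddCommGroup H] [InnerProductSpace ℝ H]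

theorem norm_sub_sq_eq_norm_add_sq_sub_four_inner (p q : H) :
    ‖p - q‖ ^ 2 = ‖p + q‖ ^ 2 - 4 * ⟪p, q⟫ := by
  rw [norm_sub_sq_real, norm_add_sq_real]
  ring

theorem norm_smul_sub_sq_add_le {s K : ℝ} (hs : 0 ≤ s) {a d : H} (hK : K ≤ ⟪d, a⟫) :
    ‖s • a - d‖ ^ 2 + 4 * s * K ≤ ‖s • a + d‖ ^ 2 := by
  rw [norm_sub_sq_eq_norm_add_sq_sub_four_inner, real_inner_smul_left, real_inner_comm]
  nlinarith [mul_le_mul_of_nonneg_left hK hs]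

theorem peacemanRachford_descent {D₁ D₂ : Set H} {F₁ F₂ : H → H} {k₁ k₂ : H → ℝ}
    (hmon₁ : ∀ x ∈ D₁, ∀ y ∈ D₁, k₁ (x - y) ≤ ⟪F₁ x - F₁ y, x - y⟫)
    (hmon₂ : ∀ x ∈ D₂, ∀ y ∈ D₂, k₂ (x - y) ≤ ⟪F₂ x - F₂ y, x - y⟫)
    {u : H} (hu₁ : u ∈ D₁) (hu₂ : u ∈ D₂) (hsol : F₁ u + F₂ u = 0)
    {s : ℝ} (hs : 0 ≤ s) {x₁ x₂ y₂ : H} (hx₁ : x₁ ∈ D₁) (hy₂ : y₂ ∈ D₂)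
    (hstep₁ : s • x₁ + F₁ x₁ = s • x₂ - F₂ x₂)
    (hstep₂ : s • y₂ + F₂ y₂ = s • x₁ - F₁ x₁) :
    4 * s * (k₁ (x₁ - u) + k₂ (y₂ - u)) ≤
      ‖s • (x₂ - u) - (F₂ x₂ - F₂ u)‖ ^ 2 - ‖s • (y₂ - u) - (F₂ y₂ - F₂ u)‖ ^ 2 := by
  have hF₁u : F₁ u = -F₂ u := eq_neg_of_add_eq_zero_left hsol
  have first_half : s • (x₂ - u) - (F₂ x₂ - F₂ u) = s • (x₁ - u) + (F₁ x₁ - F₁ u) := by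
    rw [hF₁u]
    linear_combination (norm := module) -hstep₁
  have second_half : s • (y₂ - u) + (F₂ y₂ - F₂ u) = s • (x₁ - u) - (F₁ x₁ - F₁ u) := by
    rw [hF₁u]
    linear_combination (norm := module) hstep₂
  have contract₁ := norm_smul_sub_sq_add_le hs (hmon₁ x₁ hx₁ u hu₁)
  have contract₂ := norm_smul_sub_sq_add_le hs (hmon₂ y₂ hy₂ u hu₂)
  rw [second_half] at contract₂
  rw [first_half]
  linarith

end InnerProductSpace

theorem stmt_4_general {H : Type*} [NormedAddCommGroup H] [InnerProductSpace ℝ H]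
    (D₁ D₂ : Set H) (F₁ F₂ : H → H) (k₁ k₂ : H → ℝ)
    (hk₁ : ∀ v, 0 ≤ k₁ v) (hk₂ : ∀ v, 0 ≤ k₂ v)
    (hmon₁ : ∀ x ∈ D₁, ∀ y ∈ D₁, k₁ (x - y) ≤ ⟪F₁ x - F₁ y, x - y⟫)
    (hmon₂ : ∀ x ∈ D₂, ∀ y ∈ D₂, k₂ (x - y) ≤ ⟪F₂ x - F₂ y, x - y⟫)
    (u : H) (hu₁ : u ∈ D₁) (hu₂ : u ∈ D₂) (hsol : F₁ u + F₂ u = 0)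
    (s : ℝ) (hs : 0 < s)
    (u₁ u₂ : ℕ → H)
    (hmem₁ : ∀ n, u₁ (n + 1) ∈ D₁) (hmem₂ : ∀ n, u₂ n ∈ D₂)
    (hiter₁ : ∀ n, s • u₁ (n + 1) + F₁ (u₁ (n + 1)) = s • u₂ n - F₂ (u₂ n))
    (hiter₂ : ∀ n, s • u₂ (n + 1) + F₂ (u₂ (n + 1)) = s • u₁ (n + 1) - F₁ (u₁ (n + 1))) :
    Tendsto (fun n => k₁ (u₁ n - u) + k₂ (u₂ n - u)) atTop (nhds 0) := by
  have hdescent (n : ℕ) := peacemanRachford_descent hmon₁ hmon₂ hu₁ hu₂ hsol hs.le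
    (hmem₁ n) (hmem₂ (n + 1)) (hiter₁ n) (hiter₂ n)
  have hsummable : Summable fun n => 4 * s * (k₁ (u₁ (n + 1) - u) + k₂ (u₂ (n + 1) - u)) :=
    summable_of_le_sub_succ (fun n => mul_nonneg (by positivity) (add_nonneg (hk₁ _) (hk₂ _)))
      (fun n => sq_nonneg _) hdescent
  rw [summable_mul_left_iff (by positivity)] at hsummable
  exact (tendsto_add_atTop_iff_nat 1).mp hsummable.tendsto_atTop_zero

/-- Peaceman–Rachford convergence: if additionally each `F_ℓ` is `k_ℓ`-monotone
with `k_ℓ ≥ 0`, then `k₁(u₁ⁿ − u) + k₂(u₂ⁿ − u) → 0` as `n → ∞`. -/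
theorem stmt_4 {H : Type*} [NormedAddCommGroup H] [InnerProductSpace ℝ H] [CompleteSpace H]
    (D₁ D₂ : Set H) (F₁ F₂ : H → H) (k₁ k₂ : H → ℝ)
    (hk₁ : ∀ v, 0 ≤ k₁ v) (hk₂ : ∀ v, 0 ≤ k₂ v)
    (hmon₁ : ∀ x ∈ D₁, ∀ y ∈ D₁, k₁ (x - y) ≤ ⟪F₁ x - F₁ y, x - y⟫)
    (hmon₂ : ∀ x ∈ D₂, ∀ y ∈ D₂, k₂ (x - y) ≤ ⟪F₂ x - F₂ y, x - y⟫)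
    (u : H) (hu₁ : u ∈ D₁) (hu₂ : u ∈ D₂) (hsol : F₁ u + F₂ u = 0)
    (s : ℝ) (hs : 0 < s)
    (u₁ u₂ : ℕ → H)
    (hmem₁ : ∀ n, u₁ (n + 1) ∈ D₁) (hmem₂ : ∀ n, u₂ n ∈ D₂)
    (hiter₁ : ∀ n, s • u₁ (n + 1) + F₁ (u₁ (n + 1)) = s • u₂ n - F₂ (u₂ n))
    (hiter₂ : ∀ n, s • u₂ (n + 1) + F₂ (u₂ (n + 1)) = s • u₁ (n + 1) - F₁ (u₁ (n + 1))) :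
    Tendsto (fun n => k₁ (u₁ n - u) + k₂ (u₂ n - u)) atTop (nhds 0) :=
  stmt_4_general D₁ D₂ F₁ F₂ k₁ k₂ hk₁ hk₂ hmon₁ hmon₂ u hu₁ hu₂ hsol s hs u₁ u₂ hmem₁ hmem₂ hiter₁
    hiter₂
end

section
/- Let H be a real Hilbert space and F_ℓ : D(F_ℓ) ⊆ H → H, ℓ = 1,…,q, operators that are k_ℓ-monotone with k_ℓ(v) ≥ c‖v‖²_H for some c > 0. Let u satisfy Σ_ℓ F_ℓ u = 0 with u ∈ ∩_ℓ D(F_ℓ) and F_ℓ u ∈ H. For s > 0 define the additive splitting iteration: (sI + F_ℓ)u_ℓ^{n+1} = s uⁿ for each ℓ, and u^{n+1} = (1/q) Σ_ℓ u_ℓ^{n+1}. Then s(s + 2c)‖u^{n+1} − u‖² − s²‖uⁿ − u‖² ≤ (1/q) Σ_ℓ ‖F_ℓ u‖²_H for every n. -/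
/-!
Testing the resolvent equation of `F_ℓ` against `u_ℓ^{n+1} - u` and using strong monotonicity,
the polarization identity and Young's inequality bounds `s(s+2c)‖u_ℓ^{n+1} - u‖²` by
`s²‖uⁿ - u‖² + ‖F_ℓ u‖²` up to the cross term `-2s⟪F_ℓ u, uⁿ - u⟫`. These cross terms cancel
when summed over `ℓ` because `Σ_ℓ F_ℓ u = 0`, and convexity of `‖·‖²` passes from the
components `u_ℓ^{n+1}` to their average `u^{n+1}`.
-/

open RealInnerProductSpace Finset

theorem norm_sq_average_le {E ι : Type*} [SeminormedAddCommGroup E] [NormedSpace ℝ E]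
    (t : Finset ι) (x : ι → E) :
    ‖(#t : ℝ)⁻¹ • ∑ i ∈ t, x i‖ ^ 2 ≤ (#t : ℝ)⁻¹ * ∑ i ∈ t, ‖x i‖ ^ 2 := by
  rcases t.eq_empty_or_nonempty with rfl | ht
  · simp
  have hconv : ConvexOn ℝ Set.univ (fun x : E ↦ ‖x‖ ^ 2) :=
    convexOn_univ_norm.pow (fun _ _ ↦ norm_nonneg _) 2
  have hw : ∑ _i ∈ t, (#t : ℝ)⁻¹ = 1 := by
    rw [sum_const, nsmul_eq_mul, mul_inv_cancel₀ (by positivity)]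
  simpa only [← smul_sum, smul_eq_mul, ← mul_sum] using
    hconv.map_sum_le (fun _ _ ↦ by positivity) hw (fun _ _ ↦ Set.mem_univ _)

theorem resolvent_step_estimate {H : Type*} [NormedAddCommGroup H] [InnerProductSpace ℝ H]
    {F : H → H} {c s : ℝ} (hs : 0 ≤ s) {x y u : H}
    (hmon : c * ‖x - u‖ ^ 2 ≤ ⟪F x - F u, x - u⟫) (hres : s • x + F x = s • y) :
    s * (s + 2 * c) * ‖x - u‖ ^ 2 + 2 * s * ⟪F u, y - u⟫ ≤
      s ^ 2 * ‖y - u‖ ^ 2 + ‖F u‖ ^ 2 := by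
  set a := x - u
  set b := y - u
  set f := F u
  have hFx : F x - f = s • (b - a) - f := by
    rw [eq_sub_of_add_eq' hres]; simp only [a, b]; module
  have hmon' : c * ‖a‖ ^ 2 ≤ s * ⟪b - a, a⟫ - ⟪f, a⟫ := by
    rwa [hFx, inner_sub_left, real_inner_smul_left] at hmon
  have hpol : 2 * ⟪b - a, a⟫ = ‖b‖ ^ 2 - ‖a‖ ^ 2 - ‖b - a‖ ^ 2 := by
    rw [norm_sub_sq_real b a, inner_sub_left, real_inner_self_eq_norm_sq]
    ring
  have hyoung : 0 ≤ ‖f + s • (a - b)‖ ^ 2 := sq_nonneg _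
  rw [norm_add_sq_real, inner_smul_right, norm_smul, mul_pow, Real.norm_eq_abs, sq_abs,
    inner_sub_right, norm_sub_rev] at hyoung
  have hmon2 := mul_le_mul_of_nonneg_left hmon' (by positivity : (0:ℝ) ≤ 2 * s)
  linear_combination hyoung + hmon2 + s ^ 2 * hpol

theorem stmt_7_general {H : Type*} [NormedAddCommGroup H] [InnerProductSpace ℝ H]
    (q : ℕ) (hq : 0 < q)
    (D : Fin q → Set H) (F : Fin q → H → H) (c : ℝ) (hc : 0 < c)
    (hmon : ∀ ℓ, ∀ x ∈ D ℓ, ∀ y ∈ D ℓ,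
      c * ‖x - y‖ ^ 2 ≤ ⟪F ℓ x - F ℓ y, x - y⟫)
    (u : H) (hu : ∀ ℓ, u ∈ D ℓ) (hsol : ∑ ℓ : Fin q, F ℓ u = 0)
    (s : ℝ) (hs : 0 < s)
    (uL : ℕ → Fin q → H) (uN : ℕ → H)
    (hmem : ∀ n ℓ, uL (n + 1) ℓ ∈ D ℓ)
    (hiter : ∀ n ℓ, s • uL (n + 1) ℓ + F ℓ (uL (n + 1) ℓ) = s • uN n)
    (havg : ∀ n, uN (n + 1) = (q : ℝ)⁻¹ • ∑ ℓ : Fin q, uL (n + 1) ℓ) :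
    ∀ n, s * (s + 2 * c) * ‖uN (n + 1) - u‖ ^ 2 - s ^ 2 * ‖uN n - u‖ ^ 2 ≤
      (q : ℝ)⁻¹ * ∑ ℓ : Fin q, ‖F ℓ u‖ ^ 2 := by
  intro n
  have hq' : (q : ℝ) ≠ 0 := by positivity
  have hsum := sum_le_sum fun ℓ (_ : ℓ ∈ univ) ↦
    resolvent_step_estimate hs.le (hmon ℓ _ (hmem n ℓ) u (hu ℓ)) (hiter n ℓ)
  have hcross : ∑ ℓ : Fin q, 2 * s * ⟪F ℓ u, uN n - u⟫ = 0 := by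
    rw [← mul_sum, ← sum_inner, hsol, inner_zero_left, mul_zero]
  rw [sum_add_distrib, sum_add_distrib, hcross, add_zero, ← mul_sum, sum_const, card_univ,
    Fintype.card_fin, nsmul_eq_mul] at hsum
  have hdiff : uN (n + 1) - u = (q : ℝ)⁻¹ • ∑ ℓ : Fin q, (uL (n + 1) ℓ - u) := by
    rw [havg n, sum_sub_distrib, sum_const, card_univ, Fintype.card_fin, ← Nat.cast_smul_eq_nsmul ℝ,
      smul_sub, smul_smul, inv_mul_cancel₀ hq', one_smul]
  have hconv : ‖uN (n + 1) - u‖ ^ 2 ≤ (q : ℝ)⁻¹ * ∑ ℓ : Fin q, ‖uL (n + 1) ℓ - u‖ ^ 2 := by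
    simpa only [hdiff, card_univ, Fintype.card_fin] using
      norm_sq_average_le univ fun ℓ ↦ uL (n + 1) ℓ - u
  rw [sub_le_iff_le_add']
  calc s * (s + 2 * c) * ‖uN (n + 1) - u‖ ^ 2
      ≤ s * (s + 2 * c) * ((q : ℝ)⁻¹ * ∑ ℓ : Fin q, ‖uL (n + 1) ℓ - u‖ ^ 2) := by gcongr
    _ = (q : ℝ)⁻¹ * (s * (s + 2 * c) * ∑ ℓ : Fin q, ‖uL (n + 1) ℓ - u‖ ^ 2) := by ring
    _ ≤ (q : ℝ)⁻¹ * (q * (s ^ 2 * ‖uN n - u‖ ^ 2) + ∑ ℓ : Fin q, ‖F ℓ u‖ ^ 2) := by gcongr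
    _ = s ^ 2 * ‖uN n - u‖ ^ 2 + (q : ℝ)⁻¹ * ∑ ℓ : Fin q, ‖F ℓ u‖ ^ 2 := by field_simp

/-- One-step estimate for the additive splitting scheme: with each `F_ℓ`
strongly monotone, `Σ_ℓ F_ℓ u = 0`, and the iterates
`(sI + F_ℓ)u_ℓ^{n+1} = s uⁿ`, `u^{n+1} = (1/q)Σ_ℓ u_ℓ^{n+1}`, one has
`s(s+2c)‖u^{n+1} − u‖² − s²‖uⁿ − u‖² ≤ (1/q)Σ_ℓ ‖F_ℓ u‖²`. -/
theorem stmt_7 {H : Type*} [NormedAddCommGroup H] [InnerProductSpace ℝ H] [CompleteSpace H]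
    (q : ℕ) (hq : 0 < q)
    (D : Fin q → Set H) (F : Fin q → H → H) (c : ℝ) (hc : 0 < c)
    (hmon : ∀ ℓ, ∀ x ∈ D ℓ, ∀ y ∈ D ℓ,
      c * ‖x - y‖ ^ 2 ≤ ⟪F ℓ x - F ℓ y, x - y⟫)
    (u : H) (hu : ∀ ℓ, u ∈ D ℓ) (hsol : ∑ ℓ : Fin q, F ℓ u = 0)
    (s : ℝ) (hs : 0 < s)
    (uL : ℕ → Fin q → H) (uN : ℕ → H)
    (hmem : ∀ n ℓ, uL (n + 1) ℓ ∈ D ℓ)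
    (hiter : ∀ n ℓ, s • uL (n + 1) ℓ + F ℓ (uL (n + 1) ℓ) = s • uN n)
    (havg : ∀ n, uN (n + 1) = (q : ℝ)⁻¹ • ∑ ℓ : Fin q, uL (n + 1) ℓ) :
    ∀ n, s * (s + 2 * c) * ‖uN (n + 1) - u‖ ^ 2 - s ^ 2 * ‖uN n - u‖ ^ 2 ≤
      (q : ℝ)⁻¹ * ∑ ℓ : Fin q, ‖F ℓ u‖ ^ 2 :=
  stmt_7_general q hq D F c hc hmon u hu hsol s hs uL uN hmem hiter havg
end
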